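/- Let (X, F) and (Y, G) be multiple-mapping dynamical systems on compact metric spaces, topologically conjugate via a homeomorphism T : X → Y. Then F is Hausdorff metric Kato chaotic if and only if G is Hausdorff metric Kato chaotic. -/
import Mathlib


open Metric Set Filter

/-- `multiImage f₁ f₂ n x` is the set `Fⁿ(x) = {f_{i₁} ∘ ⋯ ∘ f_{iₙ}(x) : iⱼ ∈ {1,2}}`
for the multiple mapping `F = {f₁, f₂}`. -/
def multiImage {X : Type*} (f₁ f₂ : X → X) : ℕ → X → Set X
  | 0, x => {x}
  | n + 1, x => multiImage f₁ f₂ n (f₁ x) ∪ multiImage f₁ f₂ n (f₂ x)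

/-- Sensitivity of a single continuous self-map. -/
def Sensitive {X : Type*} [MetricSpace X] (f : X → X) : Prop :=
  ∃ δ > (0:ℝ), ∀ U : Set X, IsOpen U → U.Nonempty →
    ∃ x ∈ U, ∃ y ∈ U, ∃ n : ℕ, 1 ≤ n ∧ δ < dist (f^[n] x) (f^[n] y)

/-- Accessibility of a single continuous self-map. -/
def Accessible {X : Type*} [MetricSpace X] (f : X → X) : Prop :=
  ∀ ε > (0:ℝ), ∀ U V : Set X, IsOpen U → IsOpen V → U.Nonempty → V.Nonempty →
    ∃ x ∈ U, ∃ y ∈ V, ∃ n : ℕ, 1 ≤ n ∧ dist (f^[n] x) (f^[n] y) < ε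

/-- Hausdorff metric sensitivity of the multiple mapping `F = {f₁, f₂}`. -/
def HSensitive {X : Type*} [MetricSpace X] (f₁ f₂ : X → X) : Prop :=
  ∃ δ > (0:ℝ), ∀ U : Set X, IsOpen U → U.Nonempty →
    ∃ x ∈ U, ∃ y ∈ U, ∃ n : ℕ, 1 ≤ n ∧
      δ < hausdorffDist (multiImage f₁ f₂ n x) (multiImage f₁ f₂ n y)

/-- Hausdorff metric accessibility of the multiple mapping `F = {f₁, f₂}`. -/
def HAccessible {X : Type*} [MetricSpace X] (f₁ f₂ : X → X) : Prop :=
  ∀ ε > (0:ℝ), ∀ U V : Set X, IsOpen U → IsOpen V → U.Nonempty → V.Nonempty →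
    ∃ x ∈ U, ∃ y ∈ V, ∃ n : ℕ, 1 ≤ n ∧
      hausdorffDist (multiImage f₁ f₂ n x) (multiImage f₁ f₂ n y) < ε

lemma multiImage_nonempty {X : Type*} (f₁ f₂ : X → X) :
    ∀ (n : ℕ) (x : X), (multiImage f₁ f₂ n x).Nonempty := by
  intro n
  induction n with
  | zero => intro x; exact ⟨x, rfl⟩
  | succ n ih => intro x; exact (ih (f₁ x)).mono subset_union_left

lemma image_multiImage {X Y : Type*} (f₁ f₂ : X → X) (g₁ g₂ : Y → Y) (T : X → Y)
    (hconj : ∀ x : X, T '' {f₁ x, f₂ x} = {g₁ (T x), g₂ (T x)}) :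
    ∀ (n : ℕ) (x : X), T '' multiImage f₁ f₂ n x = multiImage g₁ g₂ n (T x) := by
  intro n
  induction n with
  | zero => intro x; simp [multiImage]
  | succ n ih =>
      intro x
      have hpair : ({T (f₁ x), T (f₂ x)} : Set Y) = {g₁ (T x), g₂ (T x)} := by
        rw [← Set.image_pair]; exact hconj x
      have h1 : (⋃ y ∈ ({T (f₁ x), T (f₂ x)} : Set Y), multiImage g₁ g₂ n y) =
          ⋃ y ∈ ({g₁ (T x), g₂ (T x)} : Set Y), multiImage g₁ g₂ n y := by
        rw [hpair]
      simp only [Set.biUnion_pair] at h1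
      calc T '' multiImage f₁ f₂ (n+1) x
          = T '' multiImage f₁ f₂ n (f₁ x) ∪ T '' multiImage f₁ f₂ n (f₂ x) := by
            simp [multiImage, Set.image_union]
        _ = multiImage g₁ g₂ n (T (f₁ x)) ∪ multiImage g₁ g₂ n (T (f₂ x)) := by
            rw [ih, ih]
        _ = multiImage g₁ g₂ n (g₁ (T x)) ∪ multiImage g₁ g₂ n (g₂ (T x)) := h1
        _ = multiImage g₁ g₂ (n+1) (T x) := rfl

lemma hausdorffDist_image_le {X Y : Type*} [MetricSpace X] [CompactSpace X]
    [MetricSpace Y] (T : X → Y) {δ ε : ℝ} (hε : 0 ≤ ε)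
    (h : ∀ a b : X, dist a b < δ → dist (T a) (T b) ≤ ε)
    {A B : Set X} (hA : A.Nonempty) (hB : B.Nonempty)
    (hAB : hausdorffDist A B < δ) :
    hausdorffDist (T '' A) (T '' B) ≤ ε := by
  have hne : EMetric.hausdorffEdist A B ≠ ⊤ :=
    hausdorffEdist_ne_top_of_nonempty_of_bounded hA hB
      ((isCompact_univ.isBounded).subset (Set.subset_univ A)) ((isCompact_univ.isBounded).subset (Set.subset_univ B))
  apply hausdorffDist_le_of_mem_dist hε
  · rintro _ ⟨a, ha, rfl⟩
    obtain ⟨b, hb, hd⟩ := exists_dist_lt_of_hausdorffDist_lt ha hAB hne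
    exact ⟨T b, Set.mem_image_of_mem T hb, h a b hd⟩
  · rintro _ ⟨b, hb, rfl⟩
    obtain ⟨a, ha, hd⟩ := exists_dist_lt_of_hausdorffDist_lt' hb hAB hne
    refine ⟨T a, Set.mem_image_of_mem T ha, ?_⟩
    rw [dist_comm]
    exact h a b hd

lemma hKato_of_conj_aux {X Y : Type*} [MetricSpace X] [CompactSpace X]
    [MetricSpace Y] [CompactSpace Y]
    (f₁ f₂ : X → X) (g₁ g₂ : Y → Y) (T : X ≃ₜ Y)
    (hconj : ∀ x : X, T '' {f₁ x, f₂ x} = {g₁ (T x), g₂ (T x)}) :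
    (HSensitive f₁ f₂ → HSensitive g₁ g₂) ∧ (HAccessible f₁ f₂ → HAccessible g₁ g₂) := by
  have hTuc : UniformContinuous T := CompactSpace.uniformContinuous_of_continuous T.continuous
  have hTsuc : UniformContinuous T.symm :=
    CompactSpace.uniformContinuous_of_continuous T.symm.continuous
  have himg := image_multiImage f₁ f₂ g₁ g₂ T hconj
  constructor
  · rintro ⟨δ, hδ, hsen⟩
    -- choose δ' from uniform continuity of T.symm at δ/2
    obtain ⟨δ', hδ', hδ'prop⟩ := Metric.uniformContinuous_iff.1 hTsuc (δ/2) (by linarith)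
    refine ⟨δ'/2, by linarith, ?_⟩
    intro U hU hUne
    obtain ⟨x, hx, y, hy, n, hn, hd⟩ := hsen (T ⁻¹' U) (hU.preimage T.continuous)
      (by obtain ⟨u, hu⟩ := hUne; exact ⟨T.symm u, by simpa using hu⟩)
    refine ⟨T x, hx, T y, hy, n, hn, ?_⟩
    rw [← himg n x, ← himg n y]
    by_contra hle
    push_neg at hle
    -- then pulling back by T.symm gives hausdorffDist ≤ δ/2 < δ, contradiction
    have : hausdorffDist (T.symm '' (T '' multiImage f₁ f₂ n x))
        (T.symm '' (T '' multiImage f₁ f₂ n y)) ≤ δ/2 := by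
      apply hausdorffDist_image_le (T.symm) (by linarith)
        (fun a b hab => le_of_lt (hδ'prop hab))
        (((multiImage_nonempty f₁ f₂ n x)).image T)
        (((multiImage_nonempty f₁ f₂ n y)).image T)
        (lt_of_le_of_lt hle (by linarith))
    simp only [Set.image_image, T.symm_apply_apply, Set.image_id'] at this
    linarith
  · intro hacc ε hε U V hU hV hUne hVne
    obtain ⟨δ, hδ, hδprop⟩ := Metric.uniformContinuous_iff.1 hTuc (ε/2) (by linarith)
    obtain ⟨x, hx, y, hy, n, hn, hd⟩ := hacc δ hδ (T ⁻¹' U) (T ⁻¹' V)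
      (hU.preimage T.continuous) (hV.preimage T.continuous)
      (by obtain ⟨u, hu⟩ := hUne; exact ⟨T.symm u, by simpa using hu⟩)
      (by obtain ⟨v, hv⟩ := hVne; exact ⟨T.symm v, by simpa using hv⟩)
    refine ⟨T x, hx, T y, hy, n, hn, ?_⟩
    rw [← himg n x, ← himg n y]
    have : hausdorffDist (T '' multiImage f₁ f₂ n x) (T '' multiImage f₁ f₂ n y) ≤ ε/2 :=
      hausdorffDist_image_le T (by linarith) (fun a b hab => le_of_lt (hδprop hab))
        (multiImage_nonempty f₁ f₂ n x) (multiImage_nonempty f₁ f₂ n y) hd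
    linarith

/-- Topological conjugacy preserves the relevant Hausdorff-metric chaotic property of
multiple mappings. -/
theorem hKato_iff_of_conj {X Y : Type*} [MetricSpace X] [CompactSpace X]
    [MetricSpace Y] [CompactSpace Y]
    (f₁ f₂ : X → X) (hf₁ : Continuous f₁) (hf₂ : Continuous f₂)
    (g₁ g₂ : Y → Y) (hg₁ : Continuous g₁) (hg₂ : Continuous g₂)
    (T : X ≃ₜ Y) (hconj : ∀ x : X, T '' {f₁ x, f₂ x} = {g₁ (T x), g₂ (T x)}) :
    (HSensitive f₁ f₂ ∧ HAccessible f₁ f₂) ↔ (HSensitive g₁ g₂ ∧ HAccessible g₁ g₂) := by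
  have hconj' : ∀ y : Y, T.symm '' {g₁ y, g₂ y} = {f₁ (T.symm y), f₂ (T.symm y)} := by
    intro y
    have := hconj (T.symm y)
    rw [T.apply_symm_apply] at this
    rw [← this, Set.image_image]
    simp
  have h1 := hKato_of_conj_aux f₁ f₂ g₁ g₂ T hconj
  have h2 := hKato_of_conj_aux g₁ g₂ f₁ f₂ T.symm hconj'
  exact ⟨fun h => ⟨h1.1 h.1, h1.2 h.2⟩, fun h => ⟨h2.1 h.1, h2.2 h.2⟩⟩
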